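/- (Key Lemma for analytic arcs, direction-matching part) Let h : ℝⁿ → ℝⁿ be a bi-Lipschitz bijection with h(0) = 0, and let γ₁, γ₂ ⊆ ℝⁿ be sets with 0 ∈ closure(γ₁ \ {0}) ∩ closure(γ₂ \ {0}) such that there exist d > 1, C > 0 with γ₁ ⊆ ST_d(γ₂;C) and γ₂ ⊆ ST_d(γ₁;C) near 0. Then D(h(γ₁)) = D(h(γ₂)); moreover for any sequence a_m ∈ h(γ₁) with a_m → 0 and a_m/‖a_m‖ → a, there exist b_m ∈ h(γ₂) with b_m → 0 and b_m/‖b_m‖ → a. -/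

import Mathlib

open Filter Metric Topology MeasureTheory

noncomputable section

abbrev E (n : ℕ) := EuclideanSpace ℝ (Fin n)

/-- Direction set of `A` at the origin. -/
def Dir (n : ℕ) (A : Set (E n)) : Set (E n) :=
  {a | ‖a‖ = 1 ∧ ∃ x : ℕ → E n, (∀ i, x i ∈ A \ {0}) ∧
    Tendsto x atTop (nhds (0 : E n)) ∧
    Tendsto (fun i => (‖x i‖)⁻¹ • x i) atTop (nhds a)}

/-- Sea-tangle neighbourhood of degree `d` and width `C`. -/
def STg (n : ℕ) (d C : ℝ) (A : Set (E n)) : Set (E n) :=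
  {x | Metric.infDist x A ≤ C * ‖x‖ ^ d}

/-- Cone over the direction set (real tangent cone). -/
def LD (n : ℕ) (A : Set (E n)) : Set (E n) :=
  {x | ∃ a ∈ Dir n A, ∃ t : ℝ, 0 ≤ t ∧ x = t • a}

/-- Sequence selection property. -/
def SSP (n : ℕ) (S : Set (E n)) : Prop :=
  ∀ a : ℕ → E n, (∀ m, a m ≠ 0) → Tendsto a atTop (nhds (0 : E n)) →
    (∃ L ∈ Dir n S, Tendsto (fun m => (‖a m‖)⁻¹ • a m) atTop (nhds L)) →
    ∀ ε > (0:ℝ), ∃ b : ℕ → E n, (∀ m, b m ∈ S) ∧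
      ∀ᶠ m in atTop, ‖a m - b m‖ ≤ ε * min ‖a m‖ ‖b m‖

/-- ST-equivalence of set-germs at the origin. -/
def STEquiv (n : ℕ) (A B : Set (E n)) : Prop :=
  ∃ d₁ > (1:ℝ), ∃ C₁ > (0:ℝ), ∃ d₂ > (1:ℝ), ∃ C₂ > (0:ℝ), ∃ ε > (0:ℝ),
    B ∩ ball (0 : E n) ε ⊆ STg n d₁ C₁ A ∧ A ∩ ball (0 : E n) ε ⊆ STg n d₂ C₂ B

/-! If `a m = h (x m) → 0` with `x m ∈ γ₁`, the sea-tangle condition yields `y m ∈ γ₂ \ {0}` with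
`‖x m - y m‖ = O(‖x m‖ ^ d)`, which is `o(‖x m‖)` because `d > 1`. The bi-Lipschitz bounds turn this
into `‖a m - h (y m)‖ = o(‖a m‖)`, and two sequences this close to each other have the same
limiting direction. -/

open Asymptotics

lemma Metric.infDist_diff_singleton {X : Type*} [PseudoMetricSpace X] {s : Set X} {z : X}
    (hz : z ∈ closure (s \ {z})) (x : X) : infDist x (s \ {z}) = infDist x s := by
  have hne : (s \ {z}).Nonempty := closure_nonempty_iff.mp ⟨z, hz⟩
  have hsub : s ⊆ closure (s \ {z}) := fun w hw => by
    rcases eq_or_ne w z with rfl | hwz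
    · exact hz
    · exact subset_closure ⟨hw, hwz⟩
  refine le_antisymm ?_ (infDist_le_infDist_of_subset Set.sdiff_subset hne)
  rw [← infDist_closure]
  exact infDist_le_infDist_of_subset hsub (hne.mono Set.sdiff_subset)

section Normalization

variable {F : Type*} [NormedAddCommGroup F] [NormedSpace ℝ F]

lemma norm_inv_norm_smul_sub_le {u v : F} (hu : u ≠ 0) (hv : v ≠ 0) :
    ‖‖u‖⁻¹ • u - ‖v‖⁻¹ • v‖ ≤ 2 * ‖u - v‖ / ‖u‖ := by
  have hu' : 0 < ‖u‖ := norm_pos_iff.mpr hu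
  have hv' : 0 < ‖v‖ := norm_pos_iff.mpr hv
  have hsplit : ‖u‖⁻¹ • u - ‖v‖⁻¹ • v =
      ‖u‖⁻¹ • (u - v) + (‖u‖⁻¹ * (‖v‖ - ‖u‖)) • (‖v‖⁻¹ • v) := by
    have hcoef : ‖u‖⁻¹ * (‖v‖ - ‖u‖) * ‖v‖⁻¹ = ‖u‖⁻¹ - ‖v‖⁻¹ := by field_simp
    rw [smul_smul, hcoef]
    module
  calc ‖‖u‖⁻¹ • u - ‖v‖⁻¹ • v‖
      ≤ ‖u‖⁻¹ * ‖u - v‖ + ‖u‖⁻¹ * |‖v‖ - ‖u‖| * 1 := by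
        rw [hsplit]
        refine (norm_add_le _ _).trans (add_le_add ?_ ?_)
        · rw [norm_smul, Real.norm_of_nonneg (by positivity)]
        · rw [norm_smul, norm_smul, norm_inv, norm_norm, inv_mul_cancel₀ hv'.ne', Real.norm_eq_abs,
            abs_mul, abs_of_pos (inv_pos.2 hu')]
    _ ≤ ‖u‖⁻¹ * ‖u - v‖ + ‖u‖⁻¹ * ‖u - v‖ * 1 := by
        gcongr
        rw [abs_sub_comm]
        exact abs_norm_sub_norm_le u v
    _ = 2 * ‖u - v‖ / ‖u‖ := by ring

lemma tendsto_inv_norm_smul_of_isLittleO {ι : Type*} {l : Filter ι} {a b : ι → F} {α : F}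
    (ha : ∀ i, a i ≠ 0) (hb : ∀ i, b i ≠ 0) (hab : (fun i => a i - b i) =o[l] a)
    (hα : Tendsto (fun i => ‖a i‖⁻¹ • a i) l (𝓝 α)) :
    Tendsto (fun i => ‖b i‖⁻¹ • b i) l (𝓝 α) := by
  have hrel : Tendsto (fun i => ‖a i - b i‖ / ‖a i‖) l (𝓝 0) :=
    hab.norm_left.norm_right.tendsto_div_nhds_zero
  have hgap : Tendsto (fun i => ‖b i‖⁻¹ • b i - ‖a i‖⁻¹ • a i) l (𝓝 0) := by
    refine squeeze_zero_norm (fun i => ?_) (by simpa using hrel.const_mul 2)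
    rw [norm_sub_rev, ← mul_div_assoc]
    exact norm_inv_norm_smul_sub_le (ha i) (hb i)
  simpa using hgap.add hα

omit [NormedSpace ℝ F] in
lemma isLittleO_norm_rpow {ι : Type*} {l : Filter ι} {u : ι → F} (hu : Tendsto u l (𝓝 0))
    {d : ℝ} (hd : 1 < d) : (fun i => ‖u i‖ ^ d) =o[l] u := by
  have hsmall : Tendsto (fun i => ‖u i‖ ^ (d - 1)) l (𝓝 0) := by
    simpa [Real.zero_rpow (sub_pos.2 hd).ne'] using hu.norm.rpow_const (Or.inr (sub_pos.2 hd).le)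
  have hfactor : (fun i => ‖u i‖ ^ d) = fun i => ‖u i‖ ^ (d - 1) * ‖u i‖ := by
    ext i
    conv_lhs =>
      rw [← sub_add_cancel d 1, Real.rpow_add' (norm_nonneg _) (by linarith), Real.rpow_one]
  rw [hfactor]
  refine ((isLittleO_one_iff ℝ).2 hsmall).mul_isBigO (isBigO_refl _ _) |>.trans_isBigO ?_
  simpa using (isBigO_refl u l).norm_left

end Normalization

section BiLipschitz

variable {n : ℕ} {h : E n → E n} {K₁ K₂ : ℝ}

theorem exists_seq_image_tendsto_dir_of_subset_STg (hh0 : h 0 = 0) (hK₁ : 0 < K₁)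
    (hlip : ∀ x y : E n, K₁ * ‖x - y‖ ≤ ‖h x - h y‖ ∧ ‖h x - h y‖ ≤ K₂ * ‖x - y‖)
    {γ₁ γ₂ : Set (E n)} (h2 : (0 : E n) ∈ closure (γ₂ \ {0})) {d C ε : ℝ} (hd : 1 < d)
    (hε : 0 < ε) (hs : γ₁ ∩ ball (0 : E n) ε ⊆ STg n d C γ₂)
    {a : ℕ → E n} {α : E n} (ha : ∀ m, a m ∈ h '' γ₁) (ha0 : ∀ m, a m ≠ 0)
    (hlim : Tendsto a atTop (𝓝 0)) (hdir : Tendsto (fun m => ‖a m‖⁻¹ • a m) atTop (𝓝 α)) :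
    ∃ b : ℕ → E n, (∀ m, b m ∈ h '' γ₂) ∧ (∀ m, b m ≠ 0) ∧ Tendsto b atTop (𝓝 0) ∧
      Tendsto (fun m => ‖b m‖⁻¹ • b m) atTop (𝓝 α) := by
  have hnorm_le : ∀ x, K₁ * ‖x‖ ≤ ‖h x‖ := fun x => by simpa [hh0] using (hlip x 0).1
  choose x hxγ hxa using ha
  have hx0 : ∀ m, x m ≠ 0 := fun m hx => ha0 m (by rw [← hxa m, hx, hh0])
  have hxa_O : x =O[atTop] a := IsBigO.of_bound K₁⁻¹ (Eventually.of_forall fun m => by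
    rw [← hxa m]
    exact (le_inv_mul_iff₀ hK₁).2 (hnorm_le _))
  have hxlim : Tendsto x atTop (𝓝 0) := hxa_O.trans_tendsto hlim
  -- Since `0 ∈ closure (γ₂ \ {0})`, near points of `γ₂` can be taken nonzero.
  have hnear : ∀ m, ∃ y ∈ γ₂ \ {0}, dist (x m) y < infDist (x m) γ₂ + ‖x m‖ ^ d := fun m => by
    rw [← infDist_diff_singleton h2]
    exact (infDist_lt_iff (closure_nonempty_iff.mp ⟨0, h2⟩)).1
      (lt_add_of_pos_right _ (Real.rpow_pos_of_pos (norm_pos_iff.2 (hx0 m)) d))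
  choose y hyγ hyd using hnear
  have hxy : (fun m => x m - y m) =O[atTop] fun m => ‖x m‖ ^ d := by
    refine IsBigO.of_bound (C + 1) ?_
    filter_upwards [hxlim.eventually (ball_mem_nhds 0 hε)] with m hm
    have hST : infDist (x m) γ₂ ≤ C * ‖x m‖ ^ d := hs ⟨hxγ m, hm⟩
    rw [Real.norm_of_nonneg (by positivity), ← dist_eq_norm]
    linarith [hyd m]
  have hab : (fun m => a m - h (y m)) =o[atTop] a := by
    have hlipO : (fun m => a m - h (y m)) =O[atTop] fun m => x m - y m :=
      IsBigO.of_bound K₂ (Eventually.of_forall fun m => by rw [← hxa m]; exact (hlip _ _).2)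
    exact (hlipO.trans_isLittleO (hxy.trans_isLittleO (isLittleO_norm_rpow hxlim hd))).trans_isBigO
      hxa_O
  have hb0 : ∀ m, h (y m) ≠ 0 := fun m hy =>
    (hyγ m).2 <| norm_le_zero_iff.1 <|
      nonpos_of_mul_nonpos_right (by simpa [hy] using hnorm_le (y m)) hK₁
  refine ⟨fun m => h (y m), fun m => ⟨y m, (hyγ m).1, rfl⟩, hb0, ?_,
    tendsto_inv_norm_smul_of_isLittleO ha0 hb0 hab hdir⟩
  simpa using hlim.sub (hab.trans_tendsto hlim)

theorem dir_image_subset_of_subset_STg (hh0 : h 0 = 0) (hK₁ : 0 < K₁)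
    (hlip : ∀ x y : E n, K₁ * ‖x - y‖ ≤ ‖h x - h y‖ ∧ ‖h x - h y‖ ≤ K₂ * ‖x - y‖)
    {γ₁ γ₂ : Set (E n)} (h2 : (0 : E n) ∈ closure (γ₂ \ {0})) {d C ε : ℝ} (hd : 1 < d)
    (hε : 0 < ε) (hs : γ₁ ∩ ball (0 : E n) ε ⊆ STg n d C γ₂) :
    Dir n (h '' γ₁) ⊆ Dir n (h '' γ₂) := by
  rintro α ⟨hα, a, ha, hlim, hdir⟩
  simp only [Set.mem_sdiff_singleton] at ha
  obtain ⟨b, hb, hb0, hblim, hbdir⟩ := exists_seq_image_tendsto_dir_of_subset_STg hh0 hK₁ hlip h2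
    hd hε hs (fun m => (ha m).1) (fun m => (ha m).2) hlim hdir
  exact ⟨hα, b, fun m => ⟨hb m, hb0 m⟩, hblim, hbdir⟩

end BiLipschitz

theorem stmt18_general (n : ℕ) (h : E n → E n) (hh0 : h 0 = 0)
    (K₁ K₂ : ℝ) (hK₁ : 0 < K₁)
    (hlip : ∀ x y : E n, K₁ * ‖x - y‖ ≤ ‖h x - h y‖ ∧ ‖h x - h y‖ ≤ K₂ * ‖x - y‖)
    (γ₁ γ₂ : Set (E n)) (h1 : (0 : E n) ∈ closure (γ₁ \ {0}))
    (h2 : (0 : E n) ∈ closure (γ₂ \ {0}))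
    (d C ε : ℝ) (hd : 1 < d) (hε : 0 < ε)
    (hs1 : γ₁ ∩ ball (0 : E n) ε ⊆ STg n d C γ₂)
    (hs2 : γ₂ ∩ ball (0 : E n) ε ⊆ STg n d C γ₁) :
    Dir n (h '' γ₁) = Dir n (h '' γ₂) ∧
    ∀ (a : ℕ → E n) (α : E n), (∀ m, a m ∈ h '' γ₁) → (∀ m, a m ≠ 0) →
      Tendsto a atTop (nhds (0 : E n)) →
      Tendsto (fun m => (‖a m‖)⁻¹ • a m) atTop (nhds α) →
      ∃ b : ℕ → E n, (∀ m, b m ∈ h '' γ₂) ∧ (∀ m, b m ≠ 0) ∧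
        Tendsto b atTop (nhds (0 : E n)) ∧
        Tendsto (fun m => (‖b m‖)⁻¹ • b m) atTop (nhds α) :=
  ⟨(dir_image_subset_of_subset_STg hh0 hK₁ hlip h2 hd hε hs1).antisymm
      (dir_image_subset_of_subset_STg hh0 hK₁ hlip h1 hd hε hs2),
    fun _ _ ha ha0 hlim hdir =>
      exists_seq_image_tendsto_dir_of_subset_STg hh0 hK₁ hlip h2 hd hε hs1 ha ha0 hlim hdir⟩

theorem stmt18 (n : ℕ) (h : E n → E n) (hbij : Function.Bijective h) (hh0 : h 0 = 0)
    (K₁ K₂ : ℝ) (hK₁ : 0 < K₁) (hK : K₁ ≤ K₂)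
    (hlip : ∀ x y : E n, K₁ * ‖x - y‖ ≤ ‖h x - h y‖ ∧ ‖h x - h y‖ ≤ K₂ * ‖x - y‖)
    (γ₁ γ₂ : Set (E n)) (h1 : (0 : E n) ∈ closure (γ₁ \ {0}))
    (h2 : (0 : E n) ∈ closure (γ₂ \ {0}))
    (d C ε : ℝ) (hd : 1 < d) (hC : 0 < C) (hε : 0 < ε)
    (hs1 : γ₁ ∩ ball (0 : E n) ε ⊆ STg n d C γ₂)
    (hs2 : γ₂ ∩ ball (0 : E n) ε ⊆ STg n d C γ₁) :
    Dir n (h '' γ₁) = Dir n (h '' γ₂) ∧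
    ∀ (a : ℕ → E n) (α : E n), (∀ m, a m ∈ h '' γ₁) → (∀ m, a m ≠ 0) →
      Tendsto a atTop (nhds (0 : E n)) →
      Tendsto (fun m => (‖a m‖)⁻¹ • a m) atTop (nhds α) →
      ∃ b : ℕ → E n, (∀ m, b m ∈ h '' γ₂) ∧ (∀ m, b m ≠ 0) ∧
        Tendsto b atTop (nhds (0 : E n)) ∧
        Tendsto (fun m => (‖b m‖)⁻¹ • b m) atTop (nhds α) :=
  stmt18_general n h hh0 K₁ K₂ hK₁ hlip γ₁ γ₂ h1 h2 d C ε hd hε hs1 hs2
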